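/- Fix an integer n > 1. Let W be a symmetric-form matrix whose parameters satisfy β = −α, a1+b1+n·(a2+b2) = 0, a1 ≥ 1, and a1+a2+α ≥ b1+b2+β+1, and suppose W minimizes ‖W‖_* among all symmetric-form matrices satisfying these same four conditions. Then for every i ∈ {1,…,n} the OOD margin is strictly negative: q_i < 0. (Theorem 2: failure of two-hop composition without identity supervision, as established in the proof.) -/

import Mathlib

/-!
The Gram matrix `WᵀW` of a symmetric-form matrix is invariant under simultaneous permutations
of the indices and under swapping the two column blocks, so it is a combination of the four
orthogonal projections onto the vectors `(v, v)` and `(v, -v)` with `v` constant or of mean zero.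
Reading off its eigenvalues gives the singular values of `W`: `|a1 + b1|` and `|a1 - b1|`, each
`n - 1` times, and `√((a1 ± b1 + n (a2 ± b2))² + n (α ± β)²)`. Hence `‖W‖_* > 2 (n - 1)` as soon
as `a1 ≥ 1` and `α ≠ β`, while `a1 = 1, b1 = -1, a2 = -1/n, b2 = 1/n, α = β = 0` is feasible with
`‖W‖_* = 2 (n - 1)`. A nonnegative margin gives `f_i(c_i) ≥ f_i(b_i)`, i.e. `b1 + b2 ≥ a1 + a2`,
and then the margin constraint forces `α ≥ β + 1`, so `W` is not a minimizer.
-/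

/-- The nuclear norm of a real matrix: the trace of the positive semidefinite
square root of `Wᵀ * W` (equivalently, the sum of the singular values of `W`). -/
noncomputable def nuclearNorm {m k : Type*} [Fintype m] [Fintype k] [DecidableEq k]
    (W : Matrix m k ℝ) : ℝ :=
  ((Matrix.posSemidef_conjTranspose_mul_self W).1.eigenvectorUnitary.1 *
    Matrix.diagonal (((↑) : ℝ → ℝ) ∘ (√·) ∘ (Matrix.posSemidef_conjTranspose_mul_self W).1.eigenvalues) *
    (star (Matrix.posSemidef_conjTranspose_mul_self W).1.eigenvectorUnitary :
      Matrix k k ℝ)).trace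

/-- The symmetric-form matrix in `ℝ^{(2n+2)×(2n)}`.  Rows are indexed by the input
tokens `a_1,…,a_n` (`Sum.inl i`), `b_1,…,b_n` (`Sum.inr (Sum.inl i)`) and the relation
tokens `r_1, r_2` (`Sum.inr (Sum.inr k)`, `k = 0, 1`); columns by the output tokens
`b_1,…,b_n` (`Sum.inl j`) and `c_1,…,c_n` (`Sum.inr j`). -/
def symW (n : ℕ) (a1 a2 b1 b2 α β : ℝ) :
    Matrix (Fin n ⊕ Fin n ⊕ Fin 2) (Fin n ⊕ Fin n) ℝ :=
  fun r y =>
    match r, y with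
    | Sum.inl i, Sum.inl j => (if i = j then a1 else 0) + a2
    | Sum.inl i, Sum.inr j => (if i = j then b1 else 0) + b2
    | Sum.inr (Sum.inl i), Sum.inl j => (if i = j then b1 else 0) + b2
    | Sum.inr (Sum.inl i), Sum.inr j => (if i = j then a1 else 0) + a2
    | Sum.inr (Sum.inr k), Sum.inl _ => if k = 0 then α else β
    | Sum.inr (Sum.inr k), Sum.inr _ => if k = 0 then β else α

/-- The OOD two-hop logit of output token `y` for input `(a_i, r_1, r_2)`:
`f_i(y) = W[a_i,y] + W[r_1,y] + W[r_2,y]`. -/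
def oodLogit (n : ℕ) (W : Matrix (Fin n ⊕ Fin n ⊕ Fin 2) (Fin n ⊕ Fin n) ℝ)
    (i : Fin n) (y : Fin n ⊕ Fin n) : ℝ :=
  W (Sum.inl i) y + W (Sum.inr (Sum.inr 0)) y + W (Sum.inr (Sum.inr 1)) y

/-- The OOD margin `q_i`: the minimum over output tokens `y ≠ c_i` of
`f_i(c_i) − f_i(y)`. -/
noncomputable def oodMargin (n : ℕ) (W : Matrix (Fin n ⊕ Fin n ⊕ Fin 2) (Fin n ⊕ Fin n) ℝ)
    (i : Fin n) : ℝ :=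
  sInf {v : ℝ | ∃ y : Fin n ⊕ Fin n, y ≠ Sum.inr i ∧
    v = oodLogit n W i (Sum.inr i) - oodLogit n W i y}

open Matrix MatrixOrder

lemma nuclearNorm_eq_trace_sqrt {m k : Type*} [Fintype m] [Fintype k] [DecidableEq k]
    (W : Matrix m k ℝ) : nuclearNorm W = (CFC.sqrt (Wᴴ * W)).trace := by
  have hA := posSemidef_conjTranspose_mul_self W
  rw [CFC.sqrt_eq_real_sqrt _ hA.nonneg, cfcₙ_eq_cfc, hA.1.cfc_eq, IsHermitian.cfc,
    Unitary.conjStarAlgAut_apply]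
  rfl

lemma nuclearNorm_eq_trace {m k : Type*} [Fintype m] [Fintype k] [DecidableEq k]
    (W : Matrix m k ℝ) {S : Matrix k k ℝ} (hS : S.PosSemidef) (h : S * S = Wᴴ * W) :
    nuclearNorm W = S.trace := by
  rw [nuclearNorm_eq_trace_sqrt, CFC.sqrt_unique h hS.nonneg]

/-- `u • (1 - J) + c • J` for the averaging projection `J = 𝟙 / n`. -/
noncomputable def avgSplit (n : ℕ) (u c : ℝ) : Matrix (Fin n) (Fin n) ℝ :=
  of fun i j => (if i = j then u else 0) + (c - u) / n

lemma sum_ite_add_mul_ite_add {n : ℕ} (i j : Fin n) (x u y v : ℝ) :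
    ∑ k : Fin n, ((if k = i then x else 0) + u) * ((if k = j then y else 0) + v)
      = (if i = j then x * y else 0) + x * v + u * y + n * (u * v) := by
  simp only [add_mul, mul_add, ite_mul, mul_ite, zero_mul, mul_zero, Finset.sum_add_distrib,
    Finset.sum_ite_eq', Finset.mem_univ, if_true, Finset.sum_const,
    Finset.card_univ, Fintype.card_fin, nsmul_eq_mul]
  split_ifs <;> simp_all <;> ring

lemma avgSplit_add (n : ℕ) (u c u' c' : ℝ) :
    avgSplit n u c + avgSplit n u' c' = avgSplit n (u + u') (c + c') := by
  ext i j
  simp only [avgSplit, Matrix.add_apply, of_apply]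
  split_ifs <;> ring

lemma avgSplit_transpose (n : ℕ) (u c : ℝ) : (avgSplit n u c)ᵀ = avgSplit n u c := by
  ext i j
  simp only [avgSplit, transpose_apply, of_apply, eq_comm (a := j)]

lemma avgSplit_mul {n : ℕ} (hn : (n : ℝ) ≠ 0) (u c u' c' : ℝ) :
    avgSplit n u c * avgSplit n u' c' = avgSplit n (u * u') (c * c') := by
  ext i j
  have := sum_ite_add_mul_ite_add i j u ((c - u) / n) u' ((c' - u') / n)
  simp only [avgSplit, mul_apply, of_apply, eq_comm (a := i)] at this ⊢
  rw [this]
  split_ifs <;> field_simp <;> ring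

lemma trace_avgSplit {n : ℕ} (hn : (n : ℝ) ≠ 0) (u c : ℝ) :
    (avgSplit n u c).trace = (n - 1) * u + c := by
  simp only [trace, diag, avgSplit, of_apply, if_true, Finset.sum_add_distrib, Finset.sum_const,
    Finset.card_univ, Fintype.card_fin, nsmul_eq_mul]
  field_simp
  ring

/-- The matrix acting by `s₀`, `s₁` on the vectors `(v, v)` and by `d₀`, `d₁` on the vectors
`(v, -v)`, where `v` has mean zero, respectively is constant. -/
noncomputable def blockSplit (n : ℕ) (s₀ s₁ d₀ d₁ : ℝ) :
    Matrix (Fin n ⊕ Fin n) (Fin n ⊕ Fin n) ℝ :=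
  fromBlocks
    (avgSplit n ((s₀ + d₀) / 2) ((s₁ + d₁) / 2)) (avgSplit n ((s₀ - d₀) / 2) ((s₁ - d₁) / 2))
    (avgSplit n ((s₀ - d₀) / 2) ((s₁ - d₁) / 2)) (avgSplit n ((s₀ + d₀) / 2) ((s₁ + d₁) / 2))

lemma blockSplit_transpose (n : ℕ) (s₀ s₁ d₀ d₁ : ℝ) :
    (blockSplit n s₀ s₁ d₀ d₁)ᵀ = blockSplit n s₀ s₁ d₀ d₁ := by
  simp only [blockSplit, fromBlocks_transpose, avgSplit_transpose]

lemma blockSplit_mul {n : ℕ} (hn : (n : ℝ) ≠ 0) (s₀ s₁ d₀ d₁ s₀' s₁' d₀' d₁' : ℝ) :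
    blockSplit n s₀ s₁ d₀ d₁ * blockSplit n s₀' s₁' d₀' d₁'
      = blockSplit n (s₀ * s₀') (s₁ * s₁') (d₀ * d₀') (d₁ * d₁') := by
  simp only [blockSplit, fromBlocks_multiply, avgSplit_mul hn, avgSplit_add]
  congr 1 <;> congr 1 <;> ring

lemma trace_blockSplit {n : ℕ} (hn : (n : ℝ) ≠ 0) (s₀ s₁ d₀ d₁ : ℝ) :
    (blockSplit n s₀ s₁ d₀ d₁).trace = (n - 1) * (s₀ + d₀) + s₁ + d₁ := by
  have h := trace_avgSplit hn ((s₀ + d₀) / 2) ((s₁ + d₁) / 2)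
  simp only [trace, diag, Fintype.sum_sum_type, blockSplit, fromBlocks_apply₁₁,
    fromBlocks_apply₂₂] at h ⊢
  rw [h]
  ring

lemma posSemidef_blockSplit {n : ℕ} (hn : (n : ℝ) ≠ 0) {s₀ s₁ d₀ d₁ : ℝ} (hs₀ : 0 ≤ s₀)
    (hs₁ : 0 ≤ s₁) (hd₀ : 0 ≤ d₀) (hd₁ : 0 ≤ d₁) : (blockSplit n s₀ s₁ d₀ d₁).PosSemidef := by
  have h := posSemidef_conjTranspose_mul_self (blockSplit n √s₀ √s₁ √d₀ √d₁)
  rwa [conjTranspose_eq_transpose_of_trivial, blockSplit_transpose, blockSplit_mul hn,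
    Real.mul_self_sqrt hs₀, Real.mul_self_sqrt hs₁, Real.mul_self_sqrt hd₀,
    Real.mul_self_sqrt hd₁] at h

lemma conjTranspose_symW_mul_symW {n : ℕ} (hn : (n : ℝ) ≠ 0) (a1 a2 b1 b2 α β : ℝ) :
    (symW n a1 a2 b1 b2 α β)ᴴ * symW n a1 a2 b1 b2 α β
      = blockSplit n ((a1 + b1) ^ 2) ((a1 + b1 + n * (a2 + b2)) ^ 2 + n * (α + β) ^ 2)
          ((a1 - b1) ^ 2) ((a1 - b1 + n * (a2 - b2)) ^ 2 + n * (α - β) ^ 2) := by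
  ext (j | j) (l | l) <;>
  simp only [mul_apply, conjTranspose_apply, star_trivial, Fintype.sum_sum_type,
    Fin.sum_univ_two, symW, blockSplit, fromBlocks_apply₁₁, fromBlocks_apply₁₂,
    fromBlocks_apply₂₁, fromBlocks_apply₂₂, avgSplit, of_apply, sum_ite_add_mul_ite_add,
    Fin.isValue, if_true, one_ne_zero, if_false] <;>
  split_ifs <;> field_simp <;> ring

lemma nuclearNorm_symW {n : ℕ} (hn : (n : ℝ) ≠ 0) (a1 a2 b1 b2 α β : ℝ) :
    nuclearNorm (symW n a1 a2 b1 b2 α β)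
      = (n - 1) * (|a1 + b1| + |a1 - b1|)
        + √((a1 + b1 + n * (a2 + b2)) ^ 2 + n * (α + β) ^ 2)
        + √((a1 - b1 + n * (a2 - b2)) ^ 2 + n * (α - β) ^ 2) := by
  have hS := posSemidef_blockSplit hn (abs_nonneg (a1 + b1))
    (Real.sqrt_nonneg ((a1 + b1 + n * (a2 + b2)) ^ 2 + n * (α + β) ^ 2)) (abs_nonneg (a1 - b1))
    (Real.sqrt_nonneg ((a1 - b1 + n * (a2 - b2)) ^ 2 + n * (α - β) ^ 2))
  refine (nuclearNorm_eq_trace _ hS ?_).trans ((trace_blockSplit hn _ _ _ _).trans (by ring))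
  rw [blockSplit_mul hn, conjTranspose_symW_mul_symW hn, abs_mul_abs_self, abs_mul_abs_self,
    Real.mul_self_sqrt (by positivity), Real.mul_self_sqrt (by positivity)]
  simp only [sq]

lemma nuclearNorm_symW_one_neg_one {n : ℕ} (hn : 0 < n) :
    nuclearNorm (symW n 1 (-(n : ℝ)⁻¹) (-1) (n : ℝ)⁻¹ 0 0) = 2 * (n - 1) := by
  have hn' : (n : ℝ) ≠ 0 := by positivity
  have hanti : (1 - -1 + n * (-(n : ℝ)⁻¹ - (n : ℝ)⁻¹) : ℝ) = 0 := by field_simp; ring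
  rw [nuclearNorm_symW hn', hanti]
  norm_num
  ring

lemma two_mul_sub_one_lt_nuclearNorm_symW {n : ℕ} (hn : 0 < n) {a1 α β : ℝ} (ha1 : 1 ≤ a1)
    (hαβ : α ≠ β) (a2 b1 b2 : ℝ) : 2 * (n - 1) < nuclearNorm (symW n a1 a2 b1 b2 α β) := by
  have hn' : (1 : ℝ) ≤ n := by exact_mod_cast hn
  have habs : 2 ≤ |a1 + b1| + |a1 - b1| := by
    linarith [le_abs_self (a1 + b1), le_abs_self (a1 - b1)]
  have hanti : 0 < √((a1 - b1 + n * (a2 - b2)) ^ 2 + n * (α - β) ^ 2) := by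
    have := sub_ne_zero.2 hαβ
    positivity
  rw [nuclearNorm_symW (by positivity)]
  nlinarith [Real.sqrt_nonneg ((a1 + b1 + n * (a2 + b2)) ^ 2 + n * (α + β) ^ 2)]

lemma oodMargin_le (n : ℕ) (W : Matrix (Fin n ⊕ Fin n ⊕ Fin 2) (Fin n ⊕ Fin n) ℝ) (i : Fin n)
    {y : Fin n ⊕ Fin n} (hy : y ≠ Sum.inr i) :
    oodMargin n W i ≤ oodLogit n W i (Sum.inr i) - oodLogit n W i y := by
  refine csInf_le (Set.Finite.bddBelow ?_) ⟨y, hy, rfl⟩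
  refine (Set.finite_range fun y => oodLogit n W i (Sum.inr i) - oodLogit n W i y).subset ?_
  rintro v ⟨y, -, rfl⟩
  exact ⟨y, rfl⟩

lemma oodMargin_symW_le (n : ℕ) (a1 a2 b1 b2 α β : ℝ) (i : Fin n) :
    oodMargin n (symW n a1 a2 b1 b2 α β) i ≤ b1 + b2 - (a1 + a2) := by
  refine (oodMargin_le n _ i (y := Sum.inl i) Sum.inl_ne_inr).trans_eq ?_
  simp only [oodLogit, symW, if_true, Fin.isValue, one_ne_zero, if_false]
  ring

theorem negative_ood_margin_general (n : ℕ) (hn : 1 < n)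
    (a1 a2 b1 b2 α β : ℝ)
    (ha1 : 1 ≤ a1) (hcon : b1 + b2 + β + 1 ≤ a1 + a2 + α)
    (hmin : ∀ a1' a2' b1' b2' α' β' : ℝ,
      β' = -α' → a1' + b1' + n * (a2' + b2') = 0 →
      1 ≤ a1' → b1' + b2' + β' + 1 ≤ a1' + a2' + α' →
      nuclearNorm (symW n a1 a2 b1 b2 α β) ≤ nuclearNorm (symW n a1' a2' b1' b2' α' β')) :
    ∀ i : Fin n, oodMargin n (symW n a1 a2 b1 b2 α β) i < 0 := by
  intro i
  have hn0 : 0 < n := zero_lt_one.trans hn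
  have hfeasible : -1 + (n : ℝ)⁻¹ + 0 + 1 ≤ 1 + -(n : ℝ)⁻¹ + 0 := by
    have : (n : ℝ)⁻¹ ≤ 2⁻¹ := inv_anti₀ two_pos (by exact_mod_cast hn)
    linarith
  have hbound := hmin 1 (-(n : ℝ)⁻¹) (-1) (n : ℝ)⁻¹ 0 0 neg_zero.symm (by ring) le_rfl hfeasible
  rw [nuclearNorm_symW_one_neg_one hn0] at hbound
  by_contra! hq
  have hαβ : α ≠ β := by
    have := hq.trans (oodMargin_symW_le n a1 a2 b1 b2 α β i)
    intro h
    linarith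
  exact (two_mul_sub_one_lt_nuclearNorm_symW hn0 ha1 hαβ a2 b1 b2).not_ge hbound

/-- Theorem 2 (failure without identity supervision): if a symmetric-form matrix
satisfying `β = −α`, `a1+b1+n·(a2+b2) = 0`, `a1 ≥ 1` and `a1+a2+α ≥ b1+b2+β+1`
minimizes the nuclear norm among all symmetric-form matrices satisfying these same
four conditions, then its OOD margin is strictly negative for every `i`. -/
theorem negative_ood_margin (n : ℕ) (hn : 1 < n)
    (a1 a2 b1 b2 α β : ℝ)
    (hβ : β = -α) (hlin : a1 + b1 + n * (a2 + b2) = 0)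
    (ha1 : 1 ≤ a1) (hcon : b1 + b2 + β + 1 ≤ a1 + a2 + α)
    (hmin : ∀ a1' a2' b1' b2' α' β' : ℝ,
      β' = -α' → a1' + b1' + n * (a2' + b2') = 0 →
      1 ≤ a1' → b1' + b2' + β' + 1 ≤ a1' + a2' + α' →
      nuclearNorm (symW n a1 a2 b1 b2 α β) ≤ nuclearNorm (symW n a1' a2' b1' b2' α' β')) :
    ∀ i : Fin n, oodMargin n (symW n a1 a2 b1 b2 α β) i < 0 :=
  negative_ood_margin_general n hn a1 a2 b1 b2 α β ha1 hcon hmin
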